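/- For a non-negative random variable H and δ ∈ (0,1), the product q(s) = E[H^{-sδ}]·E[H^{-(1-s)δ}] is monotonically nondecreasing as s moves away from 1/2 in either direction; in particular, for s < 0 ('greedy' power allocation), q(s) ≥ q(0), so greedy power allocations are worse than constant power under the SINR-outage metric. -/

import Mathlib

open MeasureTheory Real Set

/-!
By Hölder's inequality `t ↦ log E[H^t]` is convex. Hence
`log q(s) = log E[H^{-sδ}] + log E[H^{-(1-s)δ}]` is a convex function of `s` (a sum of a convex
function precomposed with affine maps), and it is invariant under `s ↦ 1 - s`. A convex function
symmetric about `1/2` is nonincreasing up to `1/2` and nondecreasing after it, and so is `q`.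
-/

theorem integral_rpow_mul_rpow_le_of_nonneg {α : Type*} [MeasurableSpace α] {μ : Measure α}
    {f g : α → ℝ} (hf_nonneg : 0 ≤ᵐ[μ] f) (hg_nonneg : 0 ≤ᵐ[μ] g)
    (hf : Integrable f μ) (hg : Integrable g μ)
    {p q : ℝ} (hp : 0 ≤ p) (hq : 0 ≤ q) (hpq : p + q = 1) :
    ∫ a, f a ^ p * g a ^ q ∂μ ≤ (∫ a, f a ∂μ) ^ p * (∫ a, g a ∂μ) ^ q := by
  have h_ofReal : ∫⁻ a, ENNReal.ofReal (f a ^ p * g a ^ q) ∂μ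
      = ∫⁻ a, ENNReal.ofReal (f a) ^ p * ENNReal.ofReal (g a) ^ q ∂μ := by
    refine lintegral_congr_ae ?_
    filter_upwards [hf_nonneg, hg_nonneg] with a hfa hga
    rw [ENNReal.ofReal_mul (rpow_nonneg hfa p), ENNReal.ofReal_rpow_of_nonneg hfa hp,
      ENNReal.ofReal_rpow_of_nonneg hga hq]
  have h_fin : (∫⁻ a, ENNReal.ofReal (f a) ∂μ) ^ p * (∫⁻ a, ENNReal.ofReal (g a) ∂μ) ^ q ≠ ⊤ :=
    ENNReal.mul_ne_top (ENNReal.rpow_ne_top_of_nonneg hp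
      ((lintegral_ofReal_ne_top_iff_integrable hf.aestronglyMeasurable hf_nonneg).2 hf))
      (ENNReal.rpow_ne_top_of_nonneg hq
      ((lintegral_ofReal_ne_top_iff_integrable hg.aestronglyMeasurable hg_nonneg).2 hg))
  have h_meas : AEStronglyMeasurable (fun a => f a ^ p * g a ^ q) μ :=
    ((hf.aemeasurable.pow_const p).mul (hg.aemeasurable.pow_const q)).aestronglyMeasurable
  have h_nonneg : 0 ≤ᵐ[μ] fun a => f a ^ p * g a ^ q := by
    filter_upwards [hf_nonneg, hg_nonneg] with a hfa hga
    exact mul_nonneg (rpow_nonneg hfa p) (rpow_nonneg hga q)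
  rw [integral_eq_lintegral_of_nonneg_ae h_nonneg h_meas,
    integral_eq_lintegral_of_nonneg_ae hf_nonneg hf.aestronglyMeasurable,
    integral_eq_lintegral_of_nonneg_ae hg_nonneg hg.aestronglyMeasurable,
    ENNReal.toReal_rpow, ENNReal.toReal_rpow, ← ENNReal.toReal_mul, h_ofReal]
  exact ENNReal.toReal_mono h_fin <| ENNReal.lintegral_mul_norm_pow_le
    hf.aemeasurable.ennreal_ofReal hg.aemeasurable.ennreal_ofReal hp hq hpq

section ConvexSymm
variable {𝕜 β : Type*} [Field 𝕜] [LinearOrder 𝕜] [IsStrictOrderedRing 𝕜]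
  [AddCommMonoid β] [LinearOrder β] [IsOrderedAddMonoid β] [Module 𝕜 β] [PosSMulStrictMono 𝕜 β]
  {f : 𝕜 → β} {m : 𝕜}

theorem ConvexOn.antitoneOn_Iic_of_apply_sub_eq (hf : ConvexOn 𝕜 univ f)
    (hsymm : ∀ x, f (m - x) = f x) : AntitoneOn f (Iic (m / 2)) := by
  intro s hs t ht hst
  have ht_mem : t ∈ segment 𝕜 s (m - s) := by
    rw [segment_eq_Icc (by linarith [show s ≤ m / 2 from hs])]
    exact ⟨hst, by linarith [show t ≤ m / 2 from ht]⟩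
  simpa [hsymm] using hf.le_on_segment (mem_univ _) (mem_univ _) ht_mem

theorem ConvexOn.monotoneOn_Ici_of_apply_sub_eq (hf : ConvexOn 𝕜 univ f)
    (hsymm : ∀ x, f (m - x) = f x) : MonotoneOn f (Ici (m / 2)) := by
  intro s hs t ht hst
  have hs_mem : s ∈ segment 𝕜 (m - t) t := by
    rw [segment_eq_Icc (by linarith [show m / 2 ≤ t from ht])]
    exact ⟨by linarith [show m / 2 ≤ s from hs], hst⟩
  simpa [hsymm] using hf.le_on_segment (mem_univ _) (mem_univ _) hs_mem

end ConvexSymm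

section Moments
variable {Ω : Type*} [MeasurableSpace Ω] {μ : Measure Ω} {H : Ω → ℝ}

theorem integral_rpow_pos [NeZero μ] (hH : ∀ ω, 0 < H ω) {t : ℝ}
    (hint : Integrable (fun ω => H ω ^ t) μ) : 0 < ∫ ω, H ω ^ t ∂μ := by
  simp_rw [rpow_def_of_pos (hH _)] at hint ⊢
  exact integral_exp_pos hint

theorem integral_rpow_combo_le (hH : ∀ ω, 0 < H ω) {u v : ℝ}
    (hu : Integrable (fun ω => H ω ^ u) μ) (hv : Integrable (fun ω => H ω ^ v) μ)
    {a b : ℝ} (ha : 0 ≤ a) (hb : 0 ≤ b) (hab : a + b = 1) :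
    ∫ ω, H ω ^ (a * u + b * v) ∂μ ≤ (∫ ω, H ω ^ u ∂μ) ^ a * (∫ ω, H ω ^ v ∂μ) ^ b := by
  have h_split : ∀ ω, H ω ^ (a * u + b * v) = (H ω ^ u) ^ a * (H ω ^ v) ^ b := fun ω => by
    rw [rpow_add (hH ω), ← rpow_mul (hH ω).le, ← rpow_mul (hH ω).le, mul_comm u, mul_comm v]
  simp_rw [h_split]
  exact integral_rpow_mul_rpow_le_of_nonneg
    (.of_forall fun ω => rpow_nonneg (hH ω).le u) (.of_forall fun ω => rpow_nonneg (hH ω).le v)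
    hu hv ha hb hab

theorem convexOn_log_integral_rpow [NeZero μ] (hH : ∀ ω, 0 < H ω)
    (hint : ∀ t : ℝ, Integrable (fun ω => H ω ^ t) μ) :
    ConvexOn ℝ univ fun t : ℝ => log (∫ ω, H ω ^ t ∂μ) := by
  refine ⟨convex_univ, fun u _ v _ a b ha hb hab => ?_⟩
  simp only [smul_eq_mul]
  have hu := integral_rpow_pos hH (hint u)
  have hv := integral_rpow_pos hH (hint v)
  calc log (∫ ω, H ω ^ (a * u + b * v) ∂μ)
      ≤ log ((∫ ω, H ω ^ u ∂μ) ^ a * (∫ ω, H ω ^ v ∂μ) ^ b) :=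
        log_le_log (integral_rpow_pos hH (hint _))
          (integral_rpow_combo_le hH (hint u) (hint v) ha hb hab)
    _ = a * log (∫ ω, H ω ^ u ∂μ) + b * log (∫ ω, H ω ^ v ∂μ) := by
        rw [log_mul (by positivity) (by positivity), log_rpow hu, log_rpow hv]

end Moments

theorem statement18_general {Ω : Type*} [MeasurableSpace Ω] (μ : Measure Ω) [IsProbabilityMeasure μ]
    (H : Ω → ℝ) (hHpos : ∀ ω, 0 < H ω) (δ : ℝ)
    (hint : ∀ t : ℝ, Integrable (fun ω => H ω ^ t) μ) :
    AntitoneOn (fun s : ℝ => (∫ ω, H ω ^ (-(s * δ)) ∂μ) * ∫ ω, H ω ^ (-((1 - s) * δ)) ∂μ)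
      (Set.Iic (1/2 : ℝ)) ∧
    MonotoneOn (fun s : ℝ => (∫ ω, H ω ^ (-(s * δ)) ∂μ) * ∫ ω, H ω ^ (-((1 - s) * δ)) ∂μ)
      (Set.Ici (1/2 : ℝ)) ∧
    (∀ s : ℝ, s < 0 →
      (∫ ω, H ω ^ (-((0 : ℝ) * δ)) ∂μ) * ∫ ω, H ω ^ (-((1 - (0 : ℝ)) * δ)) ∂μ ≤
      (∫ ω, H ω ^ (-(s * δ)) ∂μ) * ∫ ω, H ω ^ (-((1 - s) * δ)) ∂μ) := by
  set L : ℝ → ℝ := fun t => log (∫ ω, H ω ^ t ∂μ)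
  have hL : ConvexOn ℝ univ L := convexOn_log_integral_rpow hHpos hint
  set g : ℝ → ℝ := L ∘ AffineMap.lineMap 0 (-δ) + L ∘ AffineMap.lineMap (-δ) 0
  have hg : ConvexOn ℝ univ g :=
    (hL.comp_affineMap (AffineMap.lineMap 0 (-δ))).add
      (hL.comp_affineMap (AffineMap.lineMap (-δ) 0))
  have hg_symm : ∀ s, g (1 - s) = g s := fun s => by
    simp only [g, Pi.add_apply, Function.comp_apply, AffineMap.lineMap_apply_ring']
    rw [add_comm]
    congr 2 <;> ring
  have hq : (fun s : ℝ => (∫ ω, H ω ^ (-(s * δ)) ∂μ) * ∫ ω, H ω ^ (-((1 - s) * δ)) ∂μ)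
      = exp ∘ g := funext fun s => by
    simp only [g, L, Function.comp_apply, Pi.add_apply, AffineMap.lineMap_apply_ring', exp_add,
      exp_log (integral_rpow_pos hHpos (hint _))]
    ring_nf
  have h_anti := exp_monotone.comp_antitoneOn (hg.antitoneOn_Iic_of_apply_sub_eq hg_symm)
  have h_mono := exp_monotone.comp_monotoneOn (hg.monotoneOn_Ici_of_apply_sub_eq hg_symm)
  rw [← hq] at h_anti h_mono
  exact ⟨h_anti, h_mono, fun s hs =>
    h_anti (mem_Iic.2 (by linarith)) (mem_Iic.2 (by norm_num)) hs.le⟩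

/-- The product `q(s) = E[H^{-sδ}] E[H^{-(1-s)δ}]` is nondecreasing as `s` moves away from
`1/2` in either direction (nonincreasing on `(-∞,1/2]`, nondecreasing on `[1/2,∞)`);
in particular for `s < 0` ("greedy" power allocation) `q(s) ≥ q(0)`, so greedy power
allocations are worse than constant power. -/
theorem statement18 {Ω : Type*} [MeasurableSpace Ω] (μ : Measure Ω) [IsProbabilityMeasure μ]
    (H : Ω → ℝ) (hHpos : ∀ ω, 0 < H ω) (δ : ℝ) (hδ : δ ∈ Set.Ioo (0 : ℝ) 1)
    (hint : ∀ t : ℝ, Integrable (fun ω => H ω ^ t) μ) :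
    AntitoneOn (fun s : ℝ => (∫ ω, H ω ^ (-(s * δ)) ∂μ) * ∫ ω, H ω ^ (-((1 - s) * δ)) ∂μ)
      (Set.Iic (1/2 : ℝ)) ∧
    MonotoneOn (fun s : ℝ => (∫ ω, H ω ^ (-(s * δ)) ∂μ) * ∫ ω, H ω ^ (-((1 - s) * δ)) ∂μ)
      (Set.Ici (1/2 : ℝ)) ∧
    (∀ s : ℝ, s < 0 →
      (∫ ω, H ω ^ (-((0 : ℝ) * δ)) ∂μ) * ∫ ω, H ω ^ (-((1 - (0 : ℝ)) * δ)) ∂μ ≤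
      (∫ ω, H ω ^ (-(s * δ)) ∂μ) * ∫ ω, H ω ^ (-((1 - s) * δ)) ∂μ) :=
  statement18_general μ H hHpos δ hint
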